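/- The inverse R-matrix R̂⁻ of O_q(N) satisfies the index-transposition symmetry Σ_{k,l} R̂⁻{}^{kl}_{ij} C^{ks} C^{lt} = Σ_{k,l} C^{ik} C^{jl} R̂⁻{}^{ts}_{lk} for all i,j,s,t ∈ {1,…,N}. -/

import Mathlib

/-!
`C` is antidiagonal, `C^{i i'} = q^{-ρ_i}`, and `ρ_{i'} = -ρ_i`. Hence both sides collapse to a
single entry of `R̂⁻`, and the claim becomes
`R̂⁻^{s't'}_{ij} q^{-ρ_{s'}} q^{-ρ_{t'}} = q^{-ρ_i} q^{-ρ_j} R̂⁻^{ts}_{j'i'}`.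
Absorbing `-(q-q⁻¹)I` into the triangular part gives
`R̂⁻^{kl}_{ab} = q^{ε(k,l)} δ_{al} δ_{bk} - (q-q⁻¹)[l ≤ a](δ_{ak} δ_{bl} - K^{kl}_{ab})`,
and the identity holds term by term because `i ↦ i'` reverses the order.
-/

open Matrix BigOperators

noncomputable section

/-- The standard `O_q(N)` exponents ρ_i; here `i : Fin N` is 0-based, so the
1-based index of the paper is `i.val + 1`. -/
def rho (N : ℕ) (i : Fin N) : ℝ :=
  if 2 * ((i : ℕ) + 1) < N + 1 then (N : ℝ) / 2 - ((i : ℕ) + 1)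
  else if 2 * ((i : ℕ) + 1) = N + 1 then 0
  else (N : ℝ) / 2 - ((i : ℕ) + 1) + 1

/-- The index map i ↦ i' = N+1−i (in 1-based indexing). -/
def pr {N : ℕ} (i : Fin N) : Fin N := i.rev

/-- The metric matrix C with entries C^{ij} = q^{−ρ_i} δ_{i,j'}. -/
def Cmat (q : ℝ) (N : ℕ) : Matrix (Fin N) (Fin N) ℝ :=
  fun i j => if j = pr i then Real.rpow q (-(rho N i)) else 0

/-- The matrix K with entries K^{kl}_{ij} = C^{ij} C_{kl}; the row index is (k,l),
the column index is (i,j), so that matrix multiplication realises the composition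
(K²)^{kl}_{ij} = Σ_{m,n} K^{kl}_{mn} K^{mn}_{ij}. -/
def Kmat (q : ℝ) (N : ℕ) : Matrix (Fin N × Fin N) (Fin N × Fin N) ℝ :=
  fun p r => Cmat q N r.1 r.2 * Cmat q N p.1 p.2

/-- The O_q(N) R-matrix R̂ with entries
R̂^{kl}_{ij} = q^{(k=l)−(k=l')}(i=l)(j=k) + (q−q⁻¹)(i<l)((i=k)(j=l) − K^{kl}_{ij});
row index p = (k,l), column index r = (i,j). -/
def Rhat (q : ℝ) (N : ℕ) : Matrix (Fin N × Fin N) (Fin N × Fin N) ℝ :=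
  fun p r =>
    q ^ (((if p.1 = p.2 then 1 else 0) - (if p.1 = pr p.2 then 1 else 0) : ℤ)) *
      (if r.1 = p.2 then 1 else 0) * (if r.2 = p.1 then 1 else 0)
    + (q - q⁻¹) * (if r.1 < p.2 then 1 else 0) *
      ((if r.1 = p.1 then 1 else 0) * (if r.2 = p.2 then 1 else 0) - Kmat q N p r)

/-- R̂⁻ = R̂ − (q−q⁻¹)·I + (q−q⁻¹)·K. -/
def Rm (q : ℝ) (N : ℕ) : Matrix (Fin N × Fin N) (Fin N × Fin N) ℝ :=
  Rhat q N - (q - q⁻¹) • (1 : Matrix (Fin N × Fin N) (Fin N × Fin N) ℝ)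
    + (q - q⁻¹) • Kmat q N

lemma pr_pr {N : ℕ} (i : Fin N) : pr (pr i) = i := Fin.rev_rev i

lemma pr_eq_iff {N : ℕ} {a b : Fin N} : pr a = b ↔ a = pr b := Fin.rev_eq_iff

lemma pr_inj {N : ℕ} {a b : Fin N} : pr a = pr b ↔ a = b := Fin.rev_inj

lemma pr_le_pr {N : ℕ} {a b : Fin N} : pr a ≤ pr b ↔ b ≤ a := Fin.rev_le_rev

lemma rho_pr (N : ℕ) (i : Fin N) : rho N (pr i) = -rho N i := by
  have hv : ((pr i : Fin N) : ℕ) = N - ((i : ℕ) + 1) := Fin.val_rev i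
  have hr : ((pr i : Fin N) : ℝ) = N - ((i : ℕ) + 1) := by
    rw [hv, Nat.cast_sub (by omega)]; push_cast; ring
  unfold rho
  rw [hr]
  rcases lt_trichotomy (2 * ((i : ℕ) + 1)) (N + 1) with h | h | h
  · rw [if_neg (by omega), if_neg (by omega), if_pos h]; ring
  · rw [if_neg (by omega), if_pos (by omega), if_neg (by omega), if_pos h]; ring
  · rw [if_pos (by omega), if_neg (by omega), if_neg (by omega)]; ring

lemma Cmat_apply (q : ℝ) (N : ℕ) (i j : Fin N) :
    Cmat q N i j = if j = pr i then q ^ (-rho N i) else 0 := rfl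

lemma rpow_neg_rho_pr {q : ℝ} (hq : 0 < q) (N : ℕ) (i : Fin N) :
    q ^ (-rho N (pr i)) = (q ^ (-rho N i))⁻¹ := by
  rw [rho_pr, Real.rpow_neg hq.le]

lemma sum_apply_mul_Cmat_mul_Cmat (q : ℝ) (N : ℕ) (M : Matrix (Fin N × Fin N) (Fin N × Fin N) ℝ)
    (r : Fin N × Fin N) (s t : Fin N) :
    ∑ k, ∑ l, M (k, l) r * Cmat q N k s * Cmat q N l t =
      M (pr s, pr t) r * q ^ (-rho N (pr s)) * q ^ (-rho N (pr t)) := by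
  simp only [Cmat_apply, ← pr_eq_iff, mul_ite, ite_mul, mul_zero, zero_mul, Finset.sum_ite_eq,
    Finset.mem_univ, if_true]

lemma sum_Cmat_mul_Cmat_mul_apply (q : ℝ) (N : ℕ) (M : Matrix (Fin N × Fin N) (Fin N × Fin N) ℝ)
    (p : Fin N × Fin N) (i j : Fin N) :
    ∑ k, ∑ l, Cmat q N i k * Cmat q N j l * M p (l, k) =
      q ^ (-rho N i) * q ^ (-rho N j) * M p (pr j, pr i) := by
  simp only [Cmat_apply, mul_ite, ite_mul, mul_zero, zero_mul, Finset.sum_ite_eq',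
    Finset.mem_univ, if_true]

lemma Rm_apply (q : ℝ) (N : ℕ) (k l a b : Fin N) :
    Rm q N (k, l) (a, b) =
      q ^ (((if k = l then 1 else 0) - (if k = pr l then 1 else 0) : ℤ)) *
          (if a = l ∧ b = k then 1 else 0)
        - (q - q⁻¹) * (if l ≤ a then 1 else 0) *
          ((if a = k ∧ b = l then 1 else 0) - Cmat q N a b * Cmat q N k l) := by
  have hdiag : (k, l) = (a, b) ↔ a = k ∧ b = l := by simp only [Prod.mk.injEq, eq_comm]
  simp only [Rm, Rhat, Kmat, Matrix.add_apply, Matrix.sub_apply, Matrix.smul_apply, one_apply,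
    hdiag, smul_eq_mul, ite_and, ← not_lt]
  split_ifs <;> ring

section
variable {q : ℝ} {N : ℕ} (i j s t : Fin N)

lemma Rm_swap_term_symm :
    q ^ (((if pr s = pr t then 1 else 0) - (if pr s = pr (pr t) then 1 else 0) : ℤ)) *
        (if i = pr t ∧ j = pr s then 1 else 0) * q ^ (-rho N (pr s)) * q ^ (-rho N (pr t)) =
      q ^ (-rho N i) * q ^ (-rho N j) *
        (q ^ (((if t = s then 1 else 0) - (if t = pr s then 1 else 0) : ℤ)) *
          (if pr j = s ∧ pr i = t then 1 else 0)) := by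
  by_cases h : i = pr t ∧ j = pr s
  · obtain ⟨rfl, rfl⟩ := h
    simp only [pr_pr, pr_inj, eq_comm (a := t), and_self, if_true]
    ring
  · have h' : ¬(pr j = s ∧ pr i = t) := by rwa [pr_eq_iff, pr_eq_iff, and_comm]
    simp only [h, h', if_false, mul_zero, zero_mul]

lemma Rm_diag_term_symm :
    (if pr t ≤ i then 1 else 0) * (if i = pr s ∧ j = pr t then 1 else 0) *
        q ^ (-rho N (pr s)) * q ^ (-rho N (pr t)) =
      q ^ (-rho N i) * q ^ (-rho N j) *
        ((if s ≤ pr j then 1 else 0) * (if pr j = t ∧ pr i = s then 1 else 0)) := by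
  by_cases h : i = pr s ∧ j = pr t
  · obtain ⟨rfl, rfl⟩ := h
    simp only [pr_pr, pr_le_pr, and_self, if_true]
    ring
  · have h' : ¬(pr j = t ∧ pr i = s) := by rwa [pr_eq_iff, pr_eq_iff, and_comm]
    simp only [h, h', if_false, mul_zero, zero_mul]

lemma Rm_Kmat_term_symm (hq : 0 < q) :
    (if pr t ≤ i then 1 else 0) * (Cmat q N i j * Cmat q N (pr s) (pr t)) *
        q ^ (-rho N (pr s)) * q ^ (-rho N (pr t)) =
      q ^ (-rho N i) * q ^ (-rho N j) *
        ((if s ≤ pr j then 1 else 0) * (Cmat q N (pr j) (pr i) * Cmat q N t s)) := by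
  by_cases h : j = pr i ∧ t = pr s
  · obtain ⟨rfl, rfl⟩ := h
    simp only [Cmat_apply, pr_pr, if_true, rpow_neg_rho_pr hq]
    field_simp
  · rcases not_and_or.mp h with h | h
    · have h' : pr i ≠ j := fun e => h e.symm
      simp only [Cmat_apply, pr_pr, h, h', if_false, mul_zero, zero_mul]
    · have h' : pr t ≠ s := fun e => h (pr_eq_iff.mp e)
      have h'' : s ≠ pr t := fun e => h (pr_eq_iff.mp e.symm)
      simp only [Cmat_apply, pr_pr, h', h'', if_false, mul_zero, zero_mul]

lemma Rm_pr_pr_mul_rpow (hq : 0 < q) :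
    Rm q N (pr s, pr t) (i, j) * q ^ (-rho N (pr s)) * q ^ (-rho N (pr t)) =
      q ^ (-rho N i) * q ^ (-rho N j) * Rm q N (t, s) (pr j, pr i) := by
  rw [Rm_apply, Rm_apply]
  linear_combination Rm_swap_term_symm i j s t
    - (q - q⁻¹) * (Rm_diag_term_symm i j s t - Rm_Kmat_term_symm i j s t hq)

end

theorem Rm_transposition_symmetry_general (q : ℝ) (hq : 0 < q) (N : ℕ)
    (i j s t : Fin N) :
    ∑ k : Fin N, ∑ l : Fin N, Rm q N (k, l) (i, j) * Cmat q N k s * Cmat q N l t =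
    ∑ k : Fin N, ∑ l : Fin N, Cmat q N i k * Cmat q N j l * Rm q N (t, s) (l, k) := by
  rw [sum_apply_mul_Cmat_mul_Cmat, sum_Cmat_mul_Cmat_mul_apply]
  exact Rm_pr_pr_mul_rpow i j s t hq

theorem Rm_transposition_symmetry (q : ℝ) (hq : 0 < q) (hq1 : q ≠ 1) (N : ℕ)
    (hN : 3 ≤ N) (i j s t : Fin N) :
    ∑ k : Fin N, ∑ l : Fin N, Rm q N (k, l) (i, j) * Cmat q N k s * Cmat q N l t =
    ∑ k : Fin N, ∑ l : Fin N, Cmat q N i k * Cmat q N j l * Rm q N (t, s) (l, k) :=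
  Rm_transposition_symmetry_general q hq N i j s t
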